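/- For every m ≥ 1 and every 1 ≤ k ≤ m, one has (16·k⁵)/(5·(m+1)) ≤ Σ_{j=1}^k σ_{j,m}⁻² ≤ (3π⁴·k⁵)/(m+1). -/

import Mathlib

open Real

/-- The singular values `σ_{j,m}` of the semi-discrete operator associated with the kernel
`κ₀(x,y) = min(x(1−y), y(1−x))` on the uniform grid `l/(m+1)`:
`σ_{j,m} = (1/(4(m+1)^{3/2} sin²(jπ/(2(m+1))))) √(1 − (2/3) sin²(jπ/(2(m+1))))`. -/
noncomputable def sigJM (m j : ℕ) : ℝ :=
  1 / (4 * Real.sqrt (((m : ℝ) + 1) ^ 3) * Real.sin ((j : ℝ) * π / (2 * ((m : ℝ) + 1))) ^ 2) *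
    Real.sqrt (1 - (2 / 3) * Real.sin ((j : ℝ) * π / (2 * ((m : ℝ) + 1))) ^ 2)

/-!
Writing `s = sin(jπ/(2(m+1)))`, one has `σ_{j,m}⁻² = 16 (m+1)³ s⁴ / (1 − (2/3) s²)`, and the
denominator lies in `[1/3, 1]`. Jordan's inequality `j/(m+1) ≤ s ≤ jπ/(2(m+1))` therefore
squeezes `σ_{j,m}⁻²` between `16 j⁴/(m+1)` and `3π⁴ j⁴/(m+1)`, and summing over `j ≤ k` with
`k⁵/5 ≤ Σ_{j=1}^k j⁴ ≤ k⁵` gives both bounds.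
-/

lemma div_five_pow_five_le_sum_Icc_pow_four (k : ℕ) :
    (k : ℝ) ^ 5 / 5 ≤ ∑ j ∈ Finset.Icc 1 k, (j : ℝ) ^ 4 := by
  induction k with
  | zero => simp
  | succ n ih =>
    rw [Finset.sum_Icc_succ_top (by omega)]
    push_cast
    have hn : (0 : ℝ) ≤ n := n.cast_nonneg
    nlinarith [mul_nonneg (mul_nonneg hn hn) hn]

lemma sum_Icc_pow_four_le_pow_five (k : ℕ) :
    ∑ j ∈ Finset.Icc 1 k, (j : ℝ) ^ 4 ≤ (k : ℝ) ^ 5 := by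
  induction k with
  | zero => simp
  | succ n ih =>
    rw [Finset.sum_Icc_succ_top (by omega)]
    push_cast
    have hn : (0 : ℝ) ≤ n := n.cast_nonneg
    nlinarith [sq_nonneg (n : ℝ)]

-- No hypothesis on `j`: when the sine vanishes both sides are `0`, since `(1 / 0)⁻¹ = 0`.
lemma inv_sigJM_sq (m j : ℕ) :
    (sigJM m j ^ 2)⁻¹ =
      16 * ((m : ℝ) + 1) ^ 3 * (Real.sin ((j : ℝ) * π / (2 * ((m : ℝ) + 1))) ^ 2) ^ 2 /
        (1 - (2 / 3) * Real.sin ((j : ℝ) * π / (2 * ((m : ℝ) + 1))) ^ 2) := by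
  have hden : 0 ≤ 1 - (2 / 3) * Real.sin ((j : ℝ) * π / (2 * ((m : ℝ) + 1))) ^ 2 := by
    nlinarith [Real.sin_sq_le_one ((j : ℝ) * π / (2 * ((m : ℝ) + 1)))]
  rw [sigJM, mul_pow, div_pow, one_pow, mul_pow, mul_pow, Real.sq_sqrt hden,
    Real.sq_sqrt (by positivity)]
  field_simp
  ring

lemma sq_le_sq_div_one_sub {t : ℝ} (h0 : 0 ≤ t) (h1 : t ≤ 1) :
    t ^ 2 ≤ t ^ 2 / (1 - 2 / 3 * t) := by
  calc t ^ 2 = t ^ 2 / 1 := (div_one _).symm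
    _ ≤ t ^ 2 / (1 - 2 / 3 * t) :=
        div_le_div_of_nonneg_left (sq_nonneg t) (by linarith) (by linarith)

lemma sq_div_one_sub_le {t : ℝ} (h1 : t ≤ 1) : t ^ 2 / (1 - 2 / 3 * t) ≤ 3 * t ^ 2 := by
  calc t ^ 2 / (1 - 2 / 3 * t) ≤ t ^ 2 / (1 / 3) :=
        div_le_div_of_nonneg_left (sq_nonneg t) (by norm_num) (by linarith)
    _ = 3 * t ^ 2 := by ring

lemma div_le_sin_mul_pi_div {j M : ℝ} (hj : 0 ≤ j) (hjM : j ≤ M) :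
    j / M ≤ Real.sin (j * π / (2 * M)) := by
  rcases hj.lt_or_eq with hj | rfl
  · have hM : 0 < M := hj.trans_le hjM
    have hθ : j * π / (2 * M) ≤ π / 2 := by
      rw [div_le_div_iff₀ (by positivity) two_pos]
      nlinarith [Real.pi_pos]
    calc j / M = 2 / π * (j * π / (2 * M)) := by field_simp
      _ ≤ _ := Real.mul_le_sin (by positivity) hθ
  · simp

lemma div_le_inv_sigJM_sq {m j : ℕ} (hjm : j ≤ m + 1) :
    16 * (j : ℝ) ^ 4 / ((m : ℝ) + 1) ≤ (sigJM m j ^ 2)⁻¹ := by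
  set M : ℝ := (m : ℝ) + 1
  set t := Real.sin ((j : ℝ) * π / (2 * M)) ^ 2
  have hjM : (j : ℝ) / M ≤ Real.sin ((j : ℝ) * π / (2 * M)) :=
    div_le_sin_mul_pi_div j.cast_nonneg (by simp only [M]; exact_mod_cast hjm)
  have ht : ((j : ℝ) / M) ^ 2 ≤ t := pow_le_pow_left₀ (by positivity) hjM 2
  rw [inv_sigJM_sq]
  calc 16 * (j : ℝ) ^ 4 / M = 16 * M ^ 3 * (((j : ℝ) / M) ^ 2) ^ 2 := by field_simp
    _ ≤ 16 * M ^ 3 * t ^ 2 := by gcongr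
    _ ≤ 16 * M ^ 3 * (t ^ 2 / (1 - 2 / 3 * t)) := by
        gcongr; exact sq_le_sq_div_one_sub (sq_nonneg _) (Real.sin_sq_le_one _)
    _ = _ := by ring

lemma inv_sigJM_sq_le (m j : ℕ) :
    (sigJM m j ^ 2)⁻¹ ≤ 3 * π ^ 4 * (j : ℝ) ^ 4 / ((m : ℝ) + 1) := by
  set M : ℝ := (m : ℝ) + 1
  set θ := (j : ℝ) * π / (2 * M)
  set t := Real.sin θ ^ 2
  rw [inv_sigJM_sq]
  calc 16 * M ^ 3 * t ^ 2 / (1 - 2 / 3 * t) = 16 * M ^ 3 * (t ^ 2 / (1 - 2 / 3 * t)) := by ring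
    _ ≤ 16 * M ^ 3 * (3 * t ^ 2) := by gcongr; exact sq_div_one_sub_le (Real.sin_sq_le_one θ)
    _ ≤ 16 * M ^ 3 * (3 * (θ ^ 2) ^ 2) := by
        gcongr
        exact Real.sin_sq_le_sq
    _ = _ := by simp only [θ]; field_simp; ring

theorem stmt_4 (m : ℕ) (k : ℕ) (hkm : k ≤ m) :
    16 * (k : ℝ) ^ 5 / (5 * ((m : ℝ) + 1)) ≤ (∑ j ∈ Finset.Icc 1 k, ((sigJM m j) ^ 2)⁻¹) ∧
    (∑ j ∈ Finset.Icc 1 k, ((sigJM m j) ^ 2)⁻¹) ≤ 3 * π ^ 4 * (k : ℝ) ^ 5 / ((m : ℝ) + 1) := by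
  constructor
  · calc 16 * (k : ℝ) ^ 5 / (5 * ((m : ℝ) + 1)) = 16 / ((m : ℝ) + 1) * ((k : ℝ) ^ 5 / 5) := by
          field_simp
      _ ≤ 16 / ((m : ℝ) + 1) * ∑ j ∈ Finset.Icc 1 k, (j : ℝ) ^ 4 := by
          gcongr; exact div_five_pow_five_le_sum_Icc_pow_four k
      _ = ∑ j ∈ Finset.Icc 1 k, 16 * (j : ℝ) ^ 4 / ((m : ℝ) + 1) := by
          rw [Finset.mul_sum]; exact Finset.sum_congr rfl fun _ _ => by ring
      _ ≤ _ := Finset.sum_le_sum fun j hj =>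
          div_le_inv_sigJM_sq (by have := (Finset.mem_Icc.1 hj).2; omega)
  · calc _ ≤ ∑ j ∈ Finset.Icc 1 k, 3 * π ^ 4 * (j : ℝ) ^ 4 / ((m : ℝ) + 1) :=
          Finset.sum_le_sum fun j _ => inv_sigJM_sq_le m j
      _ = 3 * π ^ 4 / ((m : ℝ) + 1) * ∑ j ∈ Finset.Icc 1 k, (j : ℝ) ^ 4 := by
          rw [Finset.mul_sum]; exact Finset.sum_congr rfl fun _ _ => by ring
      _ ≤ 3 * π ^ 4 / ((m : ℝ) + 1) * (k : ℝ) ^ 5 := by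
          gcongr; exact sum_Icc_pow_four_le_pow_five k
      _ = _ := by ring
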